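/- Fix γ ∈ (0,1) and let σ : ℝ → ℝ be the leaky-ReLU σ(t) = t for t > 0 and σ(t) = γt for t ≤ 0. For β > 0 define φ_β : ℝ² → ℝ by φ_β(X) = −σ(X₁) + σ(X₁ + βX₂). Then: (i) for every Borel probability measure μ on ℝ² that is absolutely continuous with respect to Lebesgue measure, lim_{β → 0⁺} ∫ ‖∇φ_β(X)‖² dμ(X) = 0 (the gradient exists μ-almost everywhere); and (ii) for every β > 0, the Lipschitz constant of φ_β satisfies ‖φ_β‖_Lip² ≥ (1−γ)² + β², so ‖φ_β‖_Lip is bounded below by (1−γ) > 0 uniformly in β. Hence, when the layer widths of the network are not nonincreasing, the expected squared gradient norm under μ can vanish while the Lipschitz constant stays bounded away from zero, even though the first-layer weight matrix W_β = [[1,0],[0,1],[1,β]] has full rank and bounded condition number. -/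

import Mathlib

open MeasureTheory Filter
open scoped Topology

noncomputable section

/-- Reinterpret a plain vector `Fin n → ℝ` as a point of Euclidean space (`ℓ²` norm). -/
def toE {n : ℕ} (x : Fin n → ℝ) : EuclideanSpace ℝ (Fin n) := WithLp.toLp 2 x

/-- Leaky-ReLU with leak coefficient `γ`: `σ(t) = t` for `t > 0` and `γt` for `t ≤ 0`. -/
def lrelu (γ t : ℝ) : ℝ := if 0 < t then t else γ * t

/-- The two-layer network `φ_β(X) = −σ(X₁) + σ(X₁ + βX₂) = [−1,0,1]·σ(W_β X)` with
`W_β = [[1,0],[0,1],[1,β]]`, whose hidden width 3 exceeds the input dimension 2. -/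
def phiB (γ β : ℝ) (X : EuclideanSpace ℝ (Fin 2)) : ℝ :=
  -lrelu γ (X 0) + lrelu γ (X 0 + β * X 1)

/-- The Lipschitz constant `‖f‖_Lip = sup_{x ≠ y} |f x − f y|/‖x − y‖`. -/
def lipConst {E : Type*} [NormedAddCommGroup E] (f : E → ℝ) : ℝ :=
  sSup {r : ℝ | ∃ x y : E, x ≠ y ∧ r = |f x - f y| / ‖x - y‖}

/-- The (Euclidean) operator norm `σ_max(W) = sup_{x ≠ 0} ‖Wx‖/‖x‖`. -/
def opNorm {m n : ℕ} (W : Matrix (Fin m) (Fin n) ℝ) : ℝ :=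
  sSup {r : ℝ | ∃ x : EuclideanSpace ℝ (Fin n), x ≠ 0 ∧ r = ‖toE (W.mulVec x)‖ / ‖x‖}

/-- Smallest singular value of a tall matrix `C : ℝ^{a×b}` (`a ≥ b`):
`σ_min(C) = inf_{x ≠ 0} ‖Cx‖/‖x‖`. -/
def sigmaMin {a b : ℕ} (C : Matrix (Fin a) (Fin b) ℝ) : ℝ :=
  sInf {r : ℝ | ∃ x : EuclideanSpace ℝ (Fin b), x ≠ 0 ∧ r = ‖toE (C.mulVec x)‖ / ‖x‖}

/-! Once `|β X₁| < |X₀|`, the hidden units `X₀` and `X₀ + βX₁` have the same sign, so both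
leaky-ReLUs act with the same slope `c ∈ {1, γ}` and near such `X` the network is the linear map
`Y ↦ cβY₁`: its gradient is `O(β)` off the null line `X₀ = 0`. Since `φ_β` is
`(2 + |β|)`-Lipschitz, dominated convergence gives (i). On the wedge `X₀ ≤ 0 < X₀ + βX₁`, however,
the two units act with different slopes and `φ_β(X) = (1 - γ)X₀ + βX₁`, a linear map of norm
`√((1 - γ)² + β²)`, which bounds the Lipschitz constant from below. -/

section LeakyReLU

variable {γ : ℝ}

theorem lrelu_eq_max (hγ : γ ≤ 1) (t : ℝ) : lrelu γ t = max t (γ * t) := by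
  unfold lrelu
  split_ifs
  · exact (max_eq_left (by nlinarith)).symm
  · exact (max_eq_right (by nlinarith)).symm

theorem abs_lrelu_sub_le (hγ : |γ| ≤ 1) (s t : ℝ) : |lrelu γ s - lrelu γ t| ≤ |s - t| := by
  rw [lrelu_eq_max (le_of_abs_le hγ), lrelu_eq_max (le_of_abs_le hγ)]
  refine (abs_max_sub_max_le_max _ _ _ _).trans (max_le le_rfl ?_)
  rw [← mul_sub, abs_mul]
  exact mul_le_of_le_one_left (abs_nonneg _) hγ

theorem lrelu_add_sub_self {s u : ℝ} (h : 0 < s ↔ 0 < s + u) :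
    lrelu γ (s + u) - lrelu γ s = (if 0 < s then 1 else γ) * u := by
  unfold lrelu
  split_ifs <;> first | ring1 | tauto

end LeakyReLU

theorem pos_iff_pos_add_of_abs_lt {s u : ℝ} (h : |u| < |s|) : 0 < s ↔ 0 < s + u := by
  constructor <;> intro <;> cases abs_cases s <;> cases abs_cases u <;> linarith

theorem div_le_lipConst {E : Type*} [NormedAddCommGroup E] {f : E → ℝ} {C : ℝ}
    (hf : ∀ x y, |f x - f y| ≤ C * ‖x - y‖) {x y : E} (hxy : x ≠ y) :
    |f x - f y| / ‖x - y‖ ≤ lipConst f := by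
  refine le_csSup ⟨C, ?_⟩ ⟨x, y, hxy, rfl⟩
  rintro r ⟨x, y, hxy, rfl⟩
  exact (div_le_iff₀ (norm_pos_iff.2 (sub_ne_zero.2 hxy))).2 (hf x y)

theorem norm_gradient_eq_norm_fderiv {F : Type*} [NormedAddCommGroup F] [InnerProductSpace ℝ F]
    [CompleteSpace F] (f : F → ℝ) (x : F) : ‖gradient f x‖ = ‖fderiv ℝ f x‖ :=
  LinearIsometryEquiv.norm_map _ _

theorem ae_apply_ne_zero {ι : Type*} [Fintype ι] (i : ι) {μ : Measure (EuclideanSpace ℝ ι)}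
    (hμ : μ ≪ volume) : ∀ᵐ X ∂μ, X i ≠ 0 := by
  classical
  let p : EuclideanSpace ℝ ι →ₗ[ℝ] ℝ := (EuclideanSpace.proj (𝕜 := ℝ) i).toLinearMap
  have hp : LinearMap.ker p ≠ ⊤ := by
    rw [Ne, LinearMap.ker_eq_top]
    intro h
    simpa [p] using LinearMap.congr_fun h (EuclideanSpace.single i 1)
  have hker : {X : EuclideanSpace ℝ ι | X i ≠ 0}ᶜ = LinearMap.ker p := by ext; simp [p]
  exact hμ (hker ▸ Measure.addHaar_submodule volume _ hp)

section Network

variable {γ β : ℝ}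

theorem phiB_eq_of_abs_lt {X : EuclideanSpace ℝ (Fin 2)} (h : |β * X 1| < |X 0|) :
    phiB γ β X = (if 0 < X 0 then 1 else γ) * (β * X 1) := by
  rw [phiB, neg_add_eq_sub, lrelu_add_sub_self (pos_iff_pos_add_of_abs_lt h)]

theorem phiB_eq_of_nonpos_of_pos {X : EuclideanSpace ℝ (Fin 2)} (h₀ : X 0 ≤ 0)
    (h₁ : 0 < X 0 + β * X 1) : phiB γ β X = (1 - γ) * X 0 + β * X 1 := by
  rw [phiB, lrelu, lrelu, if_neg h₀.not_gt, if_pos h₁]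
  ring

theorem abs_phiB_sub_le (hγ : |γ| ≤ 1) (x y : EuclideanSpace ℝ (Fin 2)) :
    |phiB γ β x - phiB γ β y| ≤ (2 + |β|) * ‖x - y‖ := by
  have h₀ : |x 0 - y 0| ≤ ‖x - y‖ := by simpa using PiLp.norm_apply_le (x - y) 0
  have h₁ : |x 1 - y 1| ≤ ‖x - y‖ := by simpa using PiLp.norm_apply_le (x - y) 1
  calc |phiB γ β x - phiB γ β y|
      = |(lrelu γ (x 0 + β * x 1) - lrelu γ (y 0 + β * y 1))
          - (lrelu γ (x 0) - lrelu γ (y 0))| := by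
        rw [phiB, phiB]; ring_nf
    _ ≤ |x 0 + β * x 1 - (y 0 + β * y 1)| + |x 0 - y 0| :=
        (abs_sub _ _).trans (add_le_add (abs_lrelu_sub_le hγ _ _) (abs_lrelu_sub_le hγ _ _))
    _ ≤ (|x 0 - y 0| + |β| * |x 1 - y 1|) + |x 0 - y 0| := by
        gcongr
        rw [← abs_mul]
        exact (abs_add_le _ _).trans_eq' (by ring_nf)
    _ ≤ (2 + |β|) * ‖x - y‖ := by nlinarith [abs_nonneg β]

theorem norm_fderiv_phiB_le (hγ : |γ| ≤ 1) (X : EuclideanSpace ℝ (Fin 2)) :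
    ‖fderiv ℝ (phiB γ β) X‖ ≤ 2 + |β| :=
  norm_fderiv_le_of_lip' ℝ (by positivity) (.of_forall fun Y => abs_phiB_sub_le hγ Y X)

theorem norm_fderiv_phiB_le_of_abs_lt (hγ : |γ| ≤ 1) {X : EuclideanSpace ℝ (Fin 2)}
    (hX : |β * X 1| < |X 0|) : ‖fderiv ℝ (phiB γ β) X‖ ≤ |β| := by
  have hX₀ : X 0 ≠ 0 := abs_pos.1 ((abs_nonneg _).trans_lt hX)
  have hc : |(if 0 < X 0 then 1 else γ)| ≤ 1 := by split_ifs <;> simp [hγ]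
  have hnear : ∀ᶠ Y in 𝓝 X, |β * Y 1| < |Y 0| ∧ 0 < Y 0 * X 0 := by
    refine (ContinuousAt.eventually_lt (by fun_prop) (by fun_prop) hX).and
      (ContinuousAt.eventually_lt (by fun_prop) (by fun_prop) ?_)
    simpa using mul_self_pos.2 hX₀
  refine norm_fderiv_le_of_lip' ℝ (abs_nonneg β) ?_
  filter_upwards [hnear] with Y ⟨hY, hYX⟩
  have h₁ : |Y 1 - X 1| ≤ ‖Y - X‖ := by simpa using PiLp.norm_apply_le (Y - X) 1
  rw [phiB_eq_of_abs_lt hY, phiB_eq_of_abs_lt hX, if_congr (pos_iff_pos_of_mul_pos hYX) rfl rfl,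
    Real.norm_eq_abs, ← mul_sub, ← mul_sub, abs_mul, abs_mul]
  calc _ ≤ 1 * (|β| * |Y 1 - X 1|) := by gcongr
    _ ≤ |β| * ‖Y - X‖ := by rw [one_mul]; gcongr

theorem tendsto_norm_fderiv_phiB (hγ : |γ| ≤ 1) {X : EuclideanSpace ℝ (Fin 2)} (hX : X 0 ≠ 0) :
    Tendsto (fun β => ‖fderiv ℝ (phiB γ β) X‖) (𝓝 0) (𝓝 0) := by
  have hsmall : ∀ᶠ β : ℝ in 𝓝 0, |β * X 1| < |X 0| :=
    ContinuousAt.eventually_lt (by fun_prop) continuousAt_const (by simpa using hX)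
  refine squeeze_zero' (.of_forall fun β => norm_nonneg _) ?_ (continuous_abs.tendsto' 0 0 abs_zero)
  filter_upwards [hsmall] with β hβ using norm_fderiv_phiB_le_of_abs_lt hγ hβ

theorem tendsto_integral_norm_gradient_phiB_sq (hγ : |γ| ≤ 1)
    {μ : Measure (EuclideanSpace ℝ (Fin 2))} [IsFiniteMeasure μ] (hμ : μ ≪ volume) :
    Tendsto (fun β => ∫ X, ‖gradient (phiB γ β) X‖ ^ 2 ∂μ) (𝓝 0) (𝓝 0) := by
  simp_rw [norm_gradient_eq_norm_fderiv]
  have hβ : ∀ᶠ β : ℝ in 𝓝 0, |β| ≤ 1 := by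
    filter_upwards [Metric.closedBall_mem_nhds (0 : ℝ) one_pos] with β hβ
    simpa using hβ
  have hlim := tendsto_integral_filter_of_dominated_convergence (μ := μ) (fun _ => 3 ^ 2)
    (.of_forall fun β => ((measurable_fderiv ℝ _).norm.pow_const 2).aestronglyMeasurable)
    (hβ.mono fun β hβ => .of_forall fun X => by
      rw [norm_pow, norm_norm]
      gcongr
      linarith [norm_fderiv_phiB_le (β := β) hγ X])
    (integrable_const _)
    ((ae_apply_ne_zero 0 hμ).mono fun X hX => by
      simpa using (tendsto_norm_fderiv_phiB hγ hX).pow 2)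
  simpa using hlim

theorem sqrt_le_lipConst_phiB (hγ : |γ| ≤ 1) (hβ : β ≠ 0) :
    √((1 - γ) ^ 2 + β ^ 2) ≤ lipConst (phiB γ β) := by
  have hγ₁ := le_of_abs_le hγ
  set v : EuclideanSpace ℝ (Fin 2) := toE ![1 - γ, β]
  -- `y` and `y + v` both lie in the wedge where `φ_β` is linear with gradient `v`.
  set y : EuclideanSpace ℝ (Fin 2) := toE ![γ - 2, (3 - γ) / β]
  have hv : v ≠ 0 := fun h => hβ (by simpa [v, toE] using congrArg (· 1) h)
  have hy : y 0 + β * y 1 = 1 := by simp [y, toE]; field_simp; ring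
  have hdiff : phiB γ β (y + v) - phiB γ β y = (1 - γ) ^ 2 + β ^ 2 := by
    rw [phiB_eq_of_nonpos_of_pos (by simp [y, v, toE]) (by simp [v, toE]; nlinarith [sq_nonneg β]),
      phiB_eq_of_nonpos_of_pos (by simp [y, toE]; linarith) (by linarith)]
    simp [v, toE]
    ring
  have hnorm : ‖v‖ = √((1 - γ) ^ 2 + β ^ 2) := by
    simp [v, toE, EuclideanSpace.norm_eq, Fin.sum_univ_two]
  calc √((1 - γ) ^ 2 + β ^ 2)
      = |phiB γ β (y + v) - phiB γ β y| / ‖y + v - y‖ := by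
        rw [add_sub_cancel_left, hdiff, hnorm, abs_of_nonneg (by positivity), Real.div_sqrt]
    _ ≤ lipConst (phiB γ β) := div_le_lipConst (abs_phiB_sub_le hγ) (by simpa using hv)

end Network

theorem Matrix.rank_eq_card_of_mul_eq_one {m n R : Type*} [Fintype m] [Fintype n] [DecidableEq n]
    [CommRing R] [StrongRankCondition R] {W : Matrix m n R} {L : Matrix n m R} (h : L * W = 1) :
    W.rank = Fintype.card n :=
  le_antisymm W.rank_le_card_width (by simpa [h] using L.rank_mul_le_right W)

theorem opNorm_le {m n : ℕ} {W : Matrix (Fin m) (Fin n) ℝ} {C : ℝ} (hC : 0 ≤ C)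
    (h : ∀ x : EuclideanSpace ℝ (Fin n), ‖toE (W.mulVec x)‖ ≤ C * ‖x‖) : opNorm W ≤ C :=
  Real.sSup_le (by rintro r ⟨x, -, rfl⟩; exact div_le_of_le_mul₀ (norm_nonneg _) hC (h x)) hC

theorem le_sigmaMin {a b : ℕ} [NeZero b] {W : Matrix (Fin a) (Fin b) ℝ} {c : ℝ}
    (h : ∀ x : EuclideanSpace ℝ (Fin b), c * ‖x‖ ≤ ‖toE (W.mulVec x)‖) : c ≤ sigmaMin W := by
  refine le_csInf ⟨_, EuclideanSpace.single 0 1, by simp, rfl⟩ ?_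
  rintro r ⟨x, hx, rfl⟩
  exact (le_div_iff₀ (norm_pos_iff.2 hx)).2 (h x)

def firstLayer (β : ℝ) : Matrix (Fin 3) (Fin 2) ℝ := !![1, 0; 0, 1; 1, β]

theorem firstLayer_rank (β : ℝ) : (firstLayer β).rank = 2 := by
  simpa using Matrix.rank_eq_card_of_mul_eq_one (L := !![1, 0, 0; 0, 1, 0]) (by
    ext i j
    fin_cases i <;> fin_cases j <;> simp [firstLayer, Matrix.mul_apply, Fin.sum_univ_succ])

theorem norm_firstLayer_mulVec_sq (β : ℝ) (x : EuclideanSpace ℝ (Fin 2)) :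
    ‖toE ((firstLayer β).mulVec x)‖ ^ 2 = ‖x‖ ^ 2 + (x 0 + β * x 1) ^ 2 := by
  simp [EuclideanSpace.real_norm_sq_eq, Fin.sum_univ_succ, toE, firstLayer, Matrix.vecHead,
    Matrix.vecTail]
  ring

theorem opNorm_div_sigmaMin_firstLayer_le {β : ℝ} (hβ : |β| ≤ 1) :
    opNorm (firstLayer β) / sigmaMin (firstLayer β) ≤ 2 := by
  have hβ₂ : β ^ 2 ≤ 1 := by simpa using pow_le_pow_left₀ (abs_nonneg β) hβ 2
  have hup : opNorm (firstLayer β) ≤ 2 := opNorm_le zero_le_two fun x => by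
    refine le_of_pow_le_pow_left₀ two_ne_zero (by positivity) ?_
    rw [norm_firstLayer_mulVec_sq, mul_pow, EuclideanSpace.real_norm_sq_eq, Fin.sum_univ_two]
    nlinarith [sq_nonneg (x 0 - β * x 1), mul_le_mul_of_nonneg_right hβ₂ (sq_nonneg (x 1))]
  have hlow : 1 ≤ sigmaMin (firstLayer β) := le_sigmaMin fun x => by
    refine le_of_pow_le_pow_left₀ two_ne_zero (norm_nonneg _) ?_
    rw [norm_firstLayer_mulVec_sq, one_mul]
    nlinarith
  simpa using div_le_div₀ zero_le_two hup one_pos hlow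

/-- For the network `φ_β` above, whose layer widths are not
nonincreasing: (i) for every absolutely continuous probability measure `μ` on `ℝ²`, the
expected squared gradient norm `∫ ‖∇φ_β‖² dμ` tends to `0` as `β → 0⁺`; yet (ii)
`‖φ_β‖²_Lip ≥ (1−γ)² + β²`, so (iii) `‖φ_β‖_Lip ≥ 1−γ > 0` uniformly in `β` — even
though (iv) the first-layer matrix `W_β` has full rank 2 and (v) uniformly bounded
condition number for `β ∈ (0,1]`. -/
theorem expected_gradient_fails_without_nonincreasing_widths
    (γ : ℝ) (hγ : γ ∈ Set.Ioo (0 : ℝ) 1) :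
    (∀ μ : Measure (EuclideanSpace ℝ (Fin 2)), IsProbabilityMeasure μ → μ ≪ volume →
      Tendsto (fun β : ℝ => ∫ X, ‖gradient (phiB γ β) X‖ ^ 2 ∂μ)
        (𝓝[>] (0 : ℝ)) (𝓝 0)) ∧
    (∀ β : ℝ, 0 < β → (1 - γ) ^ 2 + β ^ 2 ≤ (lipConst (phiB γ β)) ^ 2) ∧
    (∀ β : ℝ, 0 < β → 1 - γ ≤ lipConst (phiB γ β)) ∧
    (∀ β : ℝ, (!![(1:ℝ), 0; 0, 1; 1, β] : Matrix (Fin 3) (Fin 2) ℝ).rank = 2) ∧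
    (∃ C : ℝ, ∀ β : ℝ, 0 < β → β ≤ 1 →
      opNorm (!![(1:ℝ), 0; 0, 1; 1, β] : Matrix (Fin 3) (Fin 2) ℝ) /
        sigmaMin (!![(1:ℝ), 0; 0, 1; 1, β] : Matrix (Fin 3) (Fin 2) ℝ) ≤ C) := by
  have hγ₁ : |γ| ≤ 1 := abs_le.2 ⟨by linarith [hγ.1], hγ.2.le⟩
  have hlip (β : ℝ) (hβ : 0 < β) : √((1 - γ) ^ 2 + β ^ 2) ≤ lipConst (phiB γ β) :=
    sqrt_le_lipConst_phiB hγ₁ hβ.ne'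
  refine ⟨fun μ _ hμ => (tendsto_integral_norm_gradient_phiB_sq hγ₁ hμ).mono_left
      nhdsWithin_le_nhds, fun β hβ => ?_, fun β hβ => ?_, firstLayer_rank,
    2, fun β hβ₀ hβ₁ => opNorm_div_sigmaMin_firstLayer_le (abs_le.2 ⟨by linarith, hβ₁⟩)⟩
  · calc (1 - γ) ^ 2 + β ^ 2 = √((1 - γ) ^ 2 + β ^ 2) ^ 2 := (Real.sq_sqrt (by positivity)).symm
      _ ≤ lipConst (phiB γ β) ^ 2 := pow_le_pow_left₀ (Real.sqrt_nonneg _) (hlip β hβ) 2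
  · calc 1 - γ = √((1 - γ) ^ 2) := (Real.sqrt_sq (by linarith [hγ.2])).symm
      _ ≤ √((1 - γ) ^ 2 + β ^ 2) := Real.sqrt_le_sqrt (le_add_of_nonneg_right (sq_nonneg β))
      _ ≤ lipConst (phiB γ β) := hlip β hβ

end
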